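/- (Theorem 2, existence of a variance weights vector.) Let A be a real m × R matrix with rank(A) = R, suppose ι_m ∉ col(A), let C be a real symmetric positive semidefinite m × m matrix, set D := (A, ι_m) (the m × (R+1) matrix obtained by appending ι_m as a column), and assume null(Dᵀ) ⊄ null(C). Let v* minimize v ↦ vᵀCv over V := {v : Aᵀv = 0, ιᵀv = 1}. Then there exists u* ∈ ℝ^m satisfying u*ᵀA = 0, u*ᵀι_m = 0, and u*ᵀCu* = v*ᵀCv*; moreover every such u* with Dᵀu* = 0 satisfies u*ᵀCv* = 0. -/

import Mathlib

/-!
Perturbing the minimiser `v*` along a direction `u` with `Dᵀu = 0` keeps it feasible, so the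
quadratic `t ↦ (v* + t u)ᵀC(v* + t u) - v*ᵀCv* = 2t uᵀCv* + t² uᵀCu` is nonnegative for all `t`;
its discriminant `4 (uᵀCv*)²` is then nonpositive, whence `uᵀCv* = 0`. For the existence part,
`null(Dᵀ) ⊄ null(C)` gives `w` with `Dᵀw = 0` and `wᵀCw > 0`, and rescaling `w` gives it the
quadratic form value `v*ᵀCv* ≥ 0`.
-/

open Matrix

namespace Matrix

variable {ι : Type*} [Fintype ι]

theorem transpose_of_snoc_one_mulVec_eq_zero_iff {α : Type*} [CommSemiring α] {n : ℕ}
    (A : Matrix ι (Fin n) α) (u : ι → α) :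
    (of fun i => Fin.snoc (A i) (1 : α))ᵀ *ᵥ u = 0 ↔ Aᵀ *ᵥ u = 0 ∧ u ⬝ᵥ 1 = 0 := by
  simp only [funext_iff, Fin.forall_fin_succ', Fin.snoc_castSucc, Fin.snoc_last, mulVec,
    dotProduct, transpose_apply, of_apply, Pi.zero_apply, Pi.one_apply, mul_comm]

theorem IsSymm.dotProduct_mulVec_add_smul {α : Type*} [CommRing α] {C : Matrix ι ι α}
    (hC : C.IsSymm) (v u : ι → α) (t : α) :
    (v + t • u) ⬝ᵥ C *ᵥ (v + t • u) =
      v ⬝ᵥ C *ᵥ v + 2 * (u ⬝ᵥ C *ᵥ v) * t + (u ⬝ᵥ C *ᵥ u) * (t * t) := by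
  have hsymm : v ⬝ᵥ C *ᵥ u = u ⬝ᵥ C *ᵥ v := by
    rw [← dotProduct_transpose_mulVec, hC.eq]
  simp only [mulVec_add, mulVec_smul, dotProduct_add, add_dotProduct, dotProduct_smul,
    smul_dotProduct, smul_eq_mul, hsymm]
  ring

theorem IsSymm.dotProduct_mulVec_eq_zero_of_isMinOn {𝕜 : Type*} [Field 𝕜] [LinearOrder 𝕜]
    [IsStrictOrderedRing 𝕜] {C : Matrix ι ι 𝕜} (hC : C.IsSymm) {S : Set (ι → 𝕜)}
    {v u : ι → 𝕜} (hmin : IsMinOn (fun x => x ⬝ᵥ C *ᵥ x) S v)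
    (hline : ∀ t : 𝕜, v + t • u ∈ S) :
    u ⬝ᵥ C *ᵥ v = 0 := by
  have hquad : ∀ t : 𝕜, 0 ≤ (u ⬝ᵥ C *ᵥ u) * (t * t) + 2 * (u ⬝ᵥ C *ᵥ v) * t + 0 := by
    intro t
    have hle : v ⬝ᵥ C *ᵥ v ≤ (v + t • u) ⬝ᵥ C *ᵥ (v + t • u) := hmin (hline t)
    rw [hC.dotProduct_mulVec_add_smul] at hle
    linarith
  have hdisc := discrim_le_zero hquad
  rw [discrim] at hdisc
  nlinarith [sq_nonneg (u ⬝ᵥ C *ᵥ v)]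

theorem PosSemidef.exists_smul_dotProduct_mulVec_eq {C : Matrix ι ι ℝ} (hC : C.PosSemidef)
    {w : ι → ℝ} (hw : C *ᵥ w ≠ 0) {c : ℝ} (hc : 0 ≤ c) :
    ∃ t : ℝ, (t • w) ⬝ᵥ C *ᵥ (t • w) = c := by
  have hpos : 0 < w ⬝ᵥ C *ᵥ w :=
    (hC.dotProduct_mulVec_nonneg w).lt_of_ne' fun h => hw ((hC.dotProduct_mulVec_zero_iff w).mp h)
  refine ⟨√(c / (w ⬝ᵥ C *ᵥ w)), ?_⟩
  rw [mulVec_smul, dotProduct_smul, smul_dotProduct, smul_eq_mul, smul_eq_mul, ← mul_assoc,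
    Real.mul_self_sqrt (div_nonneg hc hpos.le), div_mul_cancel₀ c hpos.ne']

end Matrix

theorem stmt_3_general (m R : ℕ)
    (A : Matrix (Fin m) (Fin R) ℝ)
    (C : Matrix (Fin m) (Fin m) ℝ) (hC : C.PosSemidef)
    (D : Matrix (Fin m) (Fin (R + 1)) ℝ)
    (hD : D = Matrix.of fun i => Fin.snoc (A i) (1 : ℝ))
    (hnull : ¬ ({u : Fin m → ℝ | Dᵀ.mulVec u = 0} ⊆ {u : Fin m → ℝ | C.mulVec u = 0}))
    (v : Fin m → ℝ)
    (hfeas : Aᵀ.mulVec v = 0 ∧ (fun _ => (1 : ℝ)) ⬝ᵥ v = 1)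
    (hmin : ∀ w : Fin m → ℝ, Aᵀ.mulVec w = 0 → (fun _ => (1 : ℝ)) ⬝ᵥ w = 1 →
      v ⬝ᵥ C.mulVec v ≤ w ⬝ᵥ C.mulVec w) :
    (∃ u : Fin m → ℝ, Aᵀ.mulVec u = 0 ∧ (u ⬝ᵥ fun _ => (1 : ℝ)) = 0 ∧
      u ⬝ᵥ C.mulVec u = v ⬝ᵥ C.mulVec v) ∧
    (∀ u : Fin m → ℝ, Dᵀ.mulVec u = 0 → u ⬝ᵥ C.mulVec v = 0) := by
  subst hD
  simp only [Set.not_subset, Set.mem_ofPred_eq, transpose_of_snoc_one_mulVec_eq_zero_iff,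
    ← Pi.one_def] at hnull hfeas hmin ⊢
  obtain ⟨hvA, hvι⟩ := hfeas
  constructor
  · obtain ⟨w, ⟨hwA, hwι⟩, hCw⟩ := hnull
    obtain ⟨t, ht⟩ := hC.exists_smul_dotProduct_mulVec_eq hCw (hC.dotProduct_mulVec_nonneg v)
    refine ⟨t • w, ?_, ?_, ?_⟩
    · rw [mulVec_smul, hwA, smul_zero]
    · rw [smul_dotProduct, hwι, smul_zero]
    · simpa using ht
  · rintro u ⟨huA, huι⟩
    refine (isHermitian_iff_isSymm.mp hC.1).dotProduct_mulVec_eq_zero_of_isMinOn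
      (S := {w | Aᵀ *ᵥ w = 0 ∧ 1 ⬝ᵥ w = 1}) (fun w hw => hmin w hw.1 hw.2) fun t => ⟨?_, ?_⟩
    · rw [mulVec_add, mulVec_smul, hvA, huA, smul_zero, add_zero]
    · rw [dotProduct_add, dotProduct_smul, dotProduct_comm 1 u, huι, hvι, smul_zero, add_zero]

/-- Theorem 2: existence of a variance weights vector `u*` with `u*ᵀA = 0`, `u*ᵀι = 0`
and `u*ᵀCu* = v*ᵀCv*`; moreover every `u` with `Dᵀu = 0` satisfies `uᵀCv* = 0`. -/
theorem stmt_3 (m R : ℕ)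
    (A : Matrix (Fin m) (Fin R) ℝ) (hrank : A.rank = R)
    (hι : ¬ ∃ x : Fin R → ℝ, A.mulVec x = fun _ => (1 : ℝ))
    (C : Matrix (Fin m) (Fin m) ℝ) (hC : C.PosSemidef)
    (D : Matrix (Fin m) (Fin (R + 1)) ℝ)
    (hD : D = Matrix.of fun i => Fin.snoc (A i) (1 : ℝ))
    (hnull : ¬ ({u : Fin m → ℝ | Dᵀ.mulVec u = 0} ⊆ {u : Fin m → ℝ | C.mulVec u = 0}))
    (v : Fin m → ℝ)
    (hfeas : Aᵀ.mulVec v = 0 ∧ (fun _ => (1 : ℝ)) ⬝ᵥ v = 1)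
    (hmin : ∀ w : Fin m → ℝ, Aᵀ.mulVec w = 0 → (fun _ => (1 : ℝ)) ⬝ᵥ w = 1 →
      v ⬝ᵥ C.mulVec v ≤ w ⬝ᵥ C.mulVec w) :
    (∃ u : Fin m → ℝ, Aᵀ.mulVec u = 0 ∧ (u ⬝ᵥ fun _ => (1 : ℝ)) = 0 ∧
      u ⬝ᵥ C.mulVec u = v ⬝ᵥ C.mulVec v) ∧
    (∀ u : Fin m → ℝ, Dᵀ.mulVec u = 0 → u ⬝ᵥ C.mulVec v = 0) :=
  stmt_3_general m R A C hC D hD hnull v hfeas hmin
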